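/- Let p_{4,k}, k = 0,…,4, be the classical Bernstein basis of ℙ₄[−1,2], i.e. p_{4,k}(x) = C(4,k)(x+1)^k(2−x)^{4−k}/81. Then the coordinates of x³ in this basis are γ_{4,0} = −1, γ_{4,1} = 5/4, γ_{4,2} = −1, γ_{4,3} = −1, γ_{4,4} = 8, and there exist nodes t_{4,k} = γ_{4,k}^{1/3} ∈ [−1,2] (real cube roots) and weights α_{4,k} = 1 such that the operator B₄f = Σ_{k=0}^4 f(t_{4,k}) p_{4,k} satisfies B₄(1) = 1 and B₄(x³) = x³; thus a generalized Bernstein operator fixing 1 and x³ exists on ℙ₄[−1,2]. -/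

import Mathlib

open Set

noncomputable section

/-- The classical Bernstein basis of `ℙ₄[-1,2]`. -/
def pB4 : Fin 5 → ℝ → ℝ :=
  fun k x => (Nat.choose 4 (k : ℕ)) * (x + 1) ^ (k : ℕ) * (2 - x) ^ (4 - (k : ℕ)) / 81

/-- The coordinates of `x³` in the classical Bernstein basis of `ℙ₄[-1,2]`. -/
def γB4 : Fin 5 → ℝ := ![-1, 5 / 4, -1, -1, 8]

/-! Every coordinate of `x³` lies in `[(-1)³, 2³]`, so the intermediate value theorem yields nodes
`t k ∈ [-1,2]` with `t k ³ = γB4 k`; with unit weights the operator then reproduces `x³` by the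
coordinate identity, and it reproduces `1` because the Bernstein basis is a partition of unity:
the binomial theorem applied to `(x - a) + (b - x) = b - a`. -/

def bernsteinBasis {K : Type*} [Field K] (a b : K) (n k : ℕ) (x : K) : K :=
  n.choose k * (x - a) ^ k * (b - x) ^ (n - k) / (b - a) ^ n

theorem sum_bernsteinBasis {K : Type*} [Field K] {a b : K} (hab : a ≠ b) (n : ℕ) (x : K) :
    ∑ k ∈ Finset.range (n + 1), bernsteinBasis a b n k x = 1 := by
  have hpow : (b - a) ^ n ≠ 0 := pow_ne_zero n (sub_ne_zero.2 hab.symm)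
  simp only [bernsteinBasis, ← Finset.sum_div, div_eq_one_iff_eq hpow]
  calc ∑ k ∈ Finset.range (n + 1), (n.choose k : K) * (x - a) ^ k * (b - x) ^ (n - k)
      = ((x - a) + (b - x)) ^ n := by
        rw [add_pow]
        exact Finset.sum_congr rfl fun k _ => by ring
    _ = (b - a) ^ n := by ring

theorem pB4_eq_bernsteinBasis (k : Fin 5) (x : ℝ) : pB4 k x = bernsteinBasis (-1) 2 4 k x := by
  simp only [pB4, bernsteinBasis]
  norm_num

theorem sum_pB4 (x : ℝ) : ∑ k, pB4 k x = 1 := by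
  simp only [pB4_eq_bernsteinBasis]
  rw [Fin.sum_univ_eq_sum_range (fun k => bernsteinBasis (-1 : ℝ) 2 4 k x)]
  exact sum_bernsteinBasis (by norm_num) 4 x

theorem cube_eq_sum_γB4_mul_pB4 (x : ℝ) : x ^ 3 = ∑ k, γB4 k * pB4 k x := by
  simp only [Fin.sum_univ_five, γB4, pB4, Matrix.cons_val_zero, Matrix.cons_val_one,
    Matrix.cons_val_two, Matrix.cons_val_three, Matrix.cons_val_four]
  norm_num [Nat.choose]
  ring

theorem γB4_mem_Icc (k : Fin 5) : γB4 k ∈ Icc ((-1 : ℝ) ^ 3) (2 ^ 3) := by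
  fin_cases k <;> norm_num [γB4]

/-- On `ℙ₄[-1,2]`, `x³` has Bernstein coordinates `(-1, 5/4, -1, -1, 8)`; taking as nodes
the real cube roots `t k = γ k ^ (1/3)` (which all lie in `[-1,2]`) and all weights `1`,
the operator `B₄ f = ∑ f(t k) p k` fixes `1` and `x³`, so a generalized Bernstein operator
fixing `1` and `x³` exists on `ℙ₄[-1,2]`. -/
theorem bernstein_operator_fixing_cube_exists_on_P4_neg_one_two :
    (∀ x : ℝ, x ^ 3 = ∑ k, γB4 k * pB4 k x) ∧
    ∃ t : Fin 5 → ℝ, (∀ k, (t k) ^ 3 = γB4 k ∧ t k ∈ Set.Icc (-1 : ℝ) 2) ∧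
      (∀ x : ℝ, ∑ k, pB4 k x = 1) ∧
      (∀ x : ℝ, ∑ k, (t k) ^ 3 * pB4 k x = x ^ 3) := by
  have cube_root : ∀ k, ∃ t ∈ Icc (-1 : ℝ) 2, t ^ 3 = γB4 k := fun k =>
    intermediate_value_Icc (by norm_num) (continuous_pow 3).continuousOn (γB4_mem_Icc k)
  choose t ht_mem ht_cube using cube_root
  refine ⟨cube_eq_sum_γB4_mul_pB4, t, fun k => ⟨ht_cube k, ht_mem k⟩, sum_pB4, fun x => ?_⟩
  simp only [ht_cube]
  exact (cube_eq_sum_γB4_mul_pB4 x).symm
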